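/- Fix W, E, T₀, ρ > 0, Δ > 0 and a sampling period T_s with 0 < T_s < 1/(2W). If two signals x, y ∈ C_{W,E,T₀,ρ} satisfy [x(nT_s)]* = [y(nT_s)]* for every n ∈ ℤ, then their unfolded samples agree: x(nT_s) = y(nT_s) for all n ∈ ℤ. -/

import Mathlib

open MeasureTheory Real

/-- Modulo reduction: the unique element of `[-Δ/2, Δ/2)` congruent to `x` modulo `Δ`. -/
noncomputable def modStar (Δ x : ℝ) : ℝ := Δ * Int.fract ((x + Δ / 2) / Δ) - Δ / 2

/-- Modulo reduction of a complex number: real and imaginary parts are reduced separately. -/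
noncomputable def cmodStar (Δ : ℝ) (z : ℂ) : ℂ :=
  (modStar Δ z.re : ℂ) + (modStar Δ z.im : ℂ) * Complex.I

/-- The class `C_{W,E,T₀,ρ}` of finite-energy bandlimited signals with decaying tails. -/
def signalClass (W E T₀ ρ : ℝ) : Set (ℝ → ℂ) :=
  {x | ∃ X : ℝ → ℂ, MemLp X 2 volume ∧
    (∀ t : ℝ, x t = ∫ f in (-W)..W, X f * Complex.exp (2 * Real.pi * Complex.I * f * t)) ∧
    (∫ t : ℝ, ‖x t‖ ^ 2) ≤ E ∧
    ∀ t : ℝ, T₀ ≤ |t| → ‖x t‖ ≤ |t| ^ (-ρ)}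

/-!
Since the reduced samples agree, each difference `x (n * Ts) - y (n * Ts)` lies in the lattice
`Δ (ℤ + iℤ)`; by the decay condition these differences tend to `0`, so only finitely many are
nonzero. Up to the factor `Ts`, the difference at `-n` is the `n`-th Fourier coefficient of the
spectrum `X - Y`, cut off to `[-W, W]` and viewed on a circle of circumference `1 / Ts > 2W`.
An `L²` function on the circle with finitely many nonzero Fourier coefficients is a.e. a
trigonometric polynomial; ours vanishes on the arc `(W, 1 / (2 Ts))` left free by oversampling,
so by analyticity the polynomial vanishes identically, and with it every difference.
-/

open Filter Topology Set

section ModularReduction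

variable {Δ : ℝ}

lemma eq_or_le_abs_sub_of_modStar_eq (hΔ : 0 < Δ) {a b : ℝ} (h : modStar Δ a = modStar Δ b) :
    a = b ∨ Δ ≤ |a - b| := by
  obtain ⟨k, hk⟩ : ∃ k : ℤ, (a + Δ / 2) / Δ - (b + Δ / 2) / Δ = k := by
    refine Int.fract_eq_fract.mp (mul_left_cancel₀ hΔ.ne' ?_)
    unfold modStar at h
    linarith
  have hab : a - b = k * Δ := by
    field_simp at hk
    linarith
  rcases eq_or_ne k 0 with rfl | hk0
  · left
    simpa [sub_eq_zero] using hab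
  · right
    rw [hab, abs_mul, abs_of_pos hΔ]
    exact le_mul_of_one_le_left hΔ.le (by exact_mod_cast Int.one_le_abs hk0)

lemma eq_or_le_norm_sub_of_cmodStar_eq (hΔ : 0 < Δ) {z w : ℂ}
    (h : cmodStar Δ z = cmodStar Δ w) : z = w ∨ Δ ≤ ‖z - w‖ := by
  have hre : modStar Δ z.re = modStar Δ w.re := by
    simpa [cmodStar] using congrArg Complex.re h
  have him : modStar Δ z.im = modStar Δ w.im := by
    simpa [cmodStar] using congrArg Complex.im h
  rcases eq_or_le_abs_sub_of_modStar_eq hΔ hre with hre' | hre'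
  · rcases eq_or_le_abs_sub_of_modStar_eq hΔ him with him' | him'
    · exact Or.inl (Complex.ext hre' him')
    · exact Or.inr (him'.trans (by simpa using Complex.abs_im_le_norm (z - w)))
  · exact Or.inr (hre'.trans (by simpa using Complex.abs_re_le_norm (z - w)))

end ModularReduction

lemma finite_setOf_ne_zero_of_tendsto_zero_of_gap {ι E : Type*} [NormedAddCommGroup E]
    {d : ι → E} {Δ : ℝ} (hΔ : 0 < Δ) (hd : Tendsto d cofinite (𝓝 0))
    (hgap : ∀ i, d i = 0 ∨ Δ ≤ ‖d i‖) : {i | d i ≠ 0}.Finite := by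
  have hsmall : ∀ᶠ i in cofinite, ‖d i‖ < Δ :=
    (tendsto_zero_iff_norm_tendsto_zero.mp hd).eventually (gt_mem_nhds hΔ)
  exact eventually_cofinite.mp (hsmall.mono fun i hi => (hgap i).resolve_right hi.not_ge)

lemma tendsto_cocompact_of_mem_signalClass {W E T₀ ρ : ℝ} (hρ : 0 < ρ) {x : ℝ → ℂ}
    (hx : x ∈ signalClass W E T₀ ρ) : Tendsto x (cocompact ℝ) (𝓝 0) := by
  obtain ⟨-, -, -, -, hdecay⟩ := hx
  refine squeeze_zero_norm' ?_ ((tendsto_rpow_neg_atTop hρ).comp tendsto_norm_cocompact_atTop)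
  filter_upwards [tendsto_norm_cocompact_atTop.eventually_ge_atTop T₀] with t ht
  exact hdecay t ht

noncomputable def bandlimited (W : ℝ) (X : ℝ → ℂ) (t : ℝ) : ℂ :=
  ∫ f in (-W)..W, X f * Complex.exp (2 * π * Complex.I * f * t)

lemma bandlimited_sub {X Y : ℝ → ℂ} (hX : MemLp X 2) (hY : MemLp Y 2) (W t : ℝ) :
    bandlimited W (X - Y) t = bandlimited W X t - bandlimited W Y t := by
  have hint : ∀ {V : ℝ → ℂ}, MemLp V 2 → IntervalIntegrable
      (fun f => V f * Complex.exp (2 * π * Complex.I * f * t)) volume (-W) W := fun hV =>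
    ((hV.locallyIntegrable one_le_two).integrableOn_isCompact isCompact_uIcc
      ).intervalIntegrable.mul_continuousOn (by fun_prop)
  simp only [bandlimited, Pi.sub_apply, sub_mul]
  exact intervalIntegral.integral_sub (hint hX) (hint hY)

namespace AddCircle

variable {T : ℝ}

lemma ae_eq_sum_fourier_of_fourierCoeff_eq_zero [Fact (0 < T)] {f : AddCircle T → ℂ}
    (hf : MemLp f 2 haarAddCircle) {s : Finset ℤ} (hs : ∀ n ∉ s, fourierCoeff f n = 0) :
    f =ᵐ[haarAddCircle] ⇑(∑ n ∈ s, fourierCoeff f n • fourier n) := by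
  have hsum := hasSum_fourier_series_L2 (hf.toLp f)
  rw [fourierCoeff_congr_ae hf.coeFn_toLp] at hsum
  have hLp : hf.toLp f =
      ContinuousMap.toLp 2 haarAddCircle ℂ (∑ n ∈ s, fourierCoeff f n • fourier n) := by
    rw [hsum.unique (hasSum_sum_of_ne_finset_zero fun n hn => by rw [hs n hn, zero_smul]),
      map_sum]
    simp_rw [map_smul]
  exact hf.coeFn_toLp.symm.trans (hLp ▸ ContinuousMap.coeFn_toLp _ _)

lemma analyticAt_sum_fourier_coe (c : ℤ → ℂ) (s : Finset ℤ) (x : ℝ) :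
    AnalyticAt ℝ (fun r : ℝ => (∑ n ∈ s, c n • fourier n : C(AddCircle T, ℂ)) r) x := by
  simp only [ContinuousMap.coe_sum, ContinuousMap.coe_smul, Finset.sum_apply, Pi.smul_apply,
    fourier_apply, fourier_coe_apply', smul_eq_mul]
  refine Finset.analyticAt_fun_sum _ fun n _ => analyticAt_const.mul ?_
  have hlin : AnalyticAt ℝ (fun r : ℝ => 2 * π * Complex.I * n / T * (r : ℂ)) x :=
    analyticAt_const.mul (Complex.ofRealCLM.analyticAt x)
  refine (analyticAt_cexp.restrictScalars.comp hlin).congr (.of_forall fun r => ?_)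
  simp only [Function.comp_apply]
  ring_nf

lemma sum_fourier_eq_zero_of_eqOn_zero {c : ℤ → ℂ} {s : Finset ℤ} {A : Set (AddCircle T)}
    (hA : IsOpen A) (hne : A.Nonempty)
    (h : EqOn (∑ n ∈ s, c n • fourier n : C(AddCircle T, ℂ)) 0 A) :
    (∑ n ∈ s, c n • fourier n : C(AddCircle T, ℂ)) = 0 := by
  obtain ⟨x₀, hx₀⟩ : (((↑) : ℝ → AddCircle T) ⁻¹' A).Nonempty := by
    obtain ⟨t, ht⟩ := hne
    obtain ⟨x, rfl⟩ := QuotientAddGroup.mk_surjective t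
    exact ⟨x, ht⟩
  have hnhds : ((↑) : ℝ → AddCircle T) ⁻¹' A ∈ 𝓝 x₀ :=
    (hA.preimage continuous_quotient_mk').mem_nhds hx₀
  have hzero := AnalyticOnNhd.eqOn_zero_of_preconnected_of_eventuallyEq_zero
    (fun x _ => analyticAt_sum_fourier_coe c s x) isPreconnected_univ (mem_univ x₀)
    (eventually_of_mem hnhds fun r hr => h hr)
  ext t
  obtain ⟨r, rfl⟩ := QuotientAddGroup.mk_surjective t
  exact hzero (mem_univ r)

theorem fourierCoeff_eq_zero_of_ae_eq_zero_on_isOpen [Fact (0 < T)] {f : AddCircle T → ℂ}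
    (hf : MemLp f 2 haarAddCircle) (hfin : {n | fourierCoeff f n ≠ 0}.Finite)
    {A : Set (AddCircle T)} (hA : IsOpen A) (hne : A.Nonempty)
    (h0 : f =ᵐ[haarAddCircle.restrict A] 0) : fourierCoeff f = 0 := by
  have hfP := ae_eq_sum_fourier_of_fourierCoeff_eq_zero hf (s := hfin.toFinset)
    fun n hn => by simpa using hn
  have hP := sum_fourier_eq_zero_of_eqOn_zero hA hne <| Measure.eqOn_open_of_ae_eq
    ((hfP.filter_mono ae_restrict_le).symm.trans h0) hA (ContinuousMap.continuous _).continuousOn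
    continuousOn_const
  rw [hP, ContinuousMap.coe_zero] at hfP
  rw [fourierCoeff_congr_ae hfP]
  ext n
  simp [fourierCoeff]

end AddCircle

lemma fourierCoeff_liftIoc_indicator {T W : ℝ} [Fact (0 < T)] (hW : 0 ≤ W) (hWT : 2 * W < T)
    (X : ℝ → ℂ) (n : ℤ) :
    fourierCoeff (AddCircle.liftIoc T (-(T / 2)) ((Icc (-W) W).indicator X)) n =
      T⁻¹ • bandlimited W X (-n / T) := by
  have hsub : Icc (-W) W ⊆ Ioc (-(T / 2)) (-(T / 2) + T) :=
    fun r hr => ⟨by linarith [hr.1], by linarith [hr.2]⟩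
  rw [fourierCoeff_eq_intervalIntegral _ _ (-(T / 2)), one_div, bandlimited,
    intervalIntegral.integral_of_le (by linarith), intervalIntegral.integral_of_le (by linarith),
    ← integral_Icc_eq_integral_Ioc (x := -W)]
  congr 1
  rw [setIntegral_congr_fun measurableSet_Ioc (g := (Icc (-W) W).indicator fun r =>
      X r * Complex.exp (2 * π * Complex.I * r * (-n / T : ℝ))),
    setIntegral_indicator measurableSet_Icc, inter_eq_self_of_subset_right hsub]
  intro r hr
  dsimp only
  rw [AddCircle.liftIoc_coe_apply hr]
  by_cases hrW : r ∈ Icc (-W) W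
  · simp only [indicator_of_mem hrW, fourier_coe_apply, smul_eq_mul]
    rw [mul_comm]
    congr 2
    push_cast
    ring
  · simp [indicator_of_notMem hrW]

theorem bandlimited_int_mul_eq_zero_of_finite {W Ts : ℝ} (hW : 0 ≤ W) (hTs : 0 < Ts)
    (hNyq : 2 * W < Ts⁻¹) {X : ℝ → ℂ} (hX : MemLp X 2)
    (hfin : {n : ℤ | bandlimited W X (n * Ts) ≠ 0}.Finite) (n : ℤ) :
    bandlimited W X (n * Ts) = 0 := by
  have : Fact (0 < Ts⁻¹) := ⟨inv_pos.mpr hTs⟩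
  set G := AddCircle.liftIoc Ts⁻¹ (-(Ts⁻¹ / 2)) ((Icc (-W) W).indicator X)
  have hcoeff : ∀ m : ℤ, fourierCoeff G m = Ts • bandlimited W X ((-m : ℤ) * Ts) := by
    intro m
    rw [fourierCoeff_liftIoc_indicator hW hNyq, inv_inv, div_inv_eq_mul, Int.cast_neg]
  have hG : MemLp G 2 AddCircle.haarAddCircle :=
    ((hX.indicator measurableSet_Icc).restrict _).memLp_liftIoc.haarAddCircle
  have hGfin : {m | fourierCoeff G m ≠ 0}.Finite :=
    (hfin.preimage neg_injective.injOn).subset fun m hm => by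
      simpa [hcoeff, hTs.ne'] using hm
  set A : Set (AddCircle Ts⁻¹) := (↑) '' Ioo W (Ts⁻¹ / 2)
  have hA : IsOpen A := QuotientAddGroup.isOpenMap_coe _ isOpen_Ioo
  have hG0 : G =ᵐ[AddCircle.haarAddCircle.restrict A] 0 := by
    refine ae_restrict_of_forall_mem hA.measurableSet ?_
    rintro _ ⟨r, hr, rfl⟩
    change AddCircle.liftIoc _ _ _ (r : AddCircle Ts⁻¹) = 0
    rw [AddCircle.liftIoc_coe_apply ⟨by linarith [hr.1], by linarith [hr.2]⟩,
      indicator_of_notMem fun h => hr.1.not_ge h.2]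
  have h := congrFun (AddCircle.fourierCoeff_eq_zero_of_ae_eq_zero_on_isOpen hG hGfin hA
    ((nonempty_Ioo.mpr (by linarith)).image _) hG0) (-n)
  rw [hcoeff, neg_neg] at h
  exact (smul_eq_zero.mp h).resolve_left hTs.ne'

theorem unfolded_samples_recovery_general
    (W E T₀ ρ Δ Ts : ℝ) (hW : 0 < W) (hρ : 0 < ρ)
    (hΔ : 0 < Δ) (hTs : 0 < Ts) (hNyq : Ts < 1 / (2 * W))
    (x y : ℝ → ℂ) (hx : x ∈ signalClass W E T₀ ρ) (hy : y ∈ signalClass W E T₀ ρ)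
    (hsamp : ∀ n : ℤ, cmodStar Δ (x (n * Ts)) = cmodStar Δ (y (n * Ts))) :
    ∀ n : ℤ, x (n * Ts) = y (n * Ts) := by
  have hsamples : Tendsto (fun m : ℤ => (m : ℝ) * Ts) cofinite (cocompact ℝ) :=
    (tendsto_cocompact_mul_right₀ hTs.ne').comp Int.tendsto_coe_cofinite
  have hdecay : Tendsto (fun m : ℤ => x (m * Ts) - y (m * Ts)) cofinite (𝓝 0) := by
    simpa using ((tendsto_cocompact_of_mem_signalClass hρ hx).comp hsamples).sub
      ((tendsto_cocompact_of_mem_signalClass hρ hy).comp hsamples)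
  have hfin := finite_setOf_ne_zero_of_tendsto_zero_of_gap hΔ hdecay fun m =>
    (eq_or_le_norm_sub_of_cmodStar_eq hΔ (hsamp m)).imp_left sub_eq_zero.mpr
  obtain ⟨X, hX, hxX, -⟩ := hx
  obtain ⟨Y, hY, hyY, -⟩ := hy
  have hdiff : ∀ m : ℤ, x (m * Ts) - y (m * Ts) = bandlimited W (X - Y) (m * Ts) := fun m => by
    rw [bandlimited_sub hX hY, hxX, hyY]
    rfl
  simp_rw [hdiff] at hfin
  have hNyq' : 2 * W < Ts⁻¹ := by
    rwa [lt_div_iff₀ (by positivity), mul_comm, ← lt_div_iff₀ hTs, one_div] at hNyq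
  intro n
  exact sub_eq_zero.mp ((hdiff n).trans
    (bandlimited_int_mul_eq_zero_of_finite hW.le hTs hNyq' (hX.sub hY) hfin n))

/-- Above the Nyquist rate, if two signals in `C_{W,E,T₀,ρ}` have the same
modulo-`Δ`-reduced samples, then their unfolded samples agree. -/
theorem unfolded_samples_recovery
    (W E T₀ ρ Δ Ts : ℝ) (hW : 0 < W) (hE : 0 < E) (hT₀ : 0 < T₀) (hρ : 0 < ρ)
    (hΔ : 0 < Δ) (hTs : 0 < Ts) (hNyq : Ts < 1 / (2 * W))
    (x y : ℝ → ℂ) (hx : x ∈ signalClass W E T₀ ρ) (hy : y ∈ signalClass W E T₀ ρ)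
    (hsamp : ∀ n : ℤ, cmodStar Δ (x (n * Ts)) = cmodStar Δ (y (n * Ts))) :
    ∀ n : ℤ, x (n * Ts) = y (n * Ts) :=
  unfolded_samples_recovery_general W E T₀ ρ Δ Ts hW hρ hΔ hTs hNyq x y hx hy hsamp
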